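/- In a dual weak brace S, for all a, b ∈ S and every idempotent e, (e + a) · b = e · b + a · b, where a · b := -a + a ∘ b - b. -/

import Mathlib

/-- A weak brace: `(S,+)` and `(S,∘)` are inverse semigroups satisfying
`a ∘ (b + c) = a ∘ b - a + a ∘ c` and `a ∘ a⁻ = -a + a`. -/
class WeakBrace (S : Type*) where
  add : S → S → S
  mul : S → S → S
  neg : S → S
  inv : S → S
  add_assoc : ∀ a b c : S, add (add a b) c = add a (add b c)
  mul_assoc : ∀ a b c : S, mul (mul a b) c = mul a (mul b c)
  add_reg : ∀ a : S, add (add a (neg a)) a = a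
  neg_reg : ∀ a : S, add (add (neg a) a) (neg a) = neg a
  neg_unique : ∀ a x : S, add (add a x) a = a → add (add x a) x = x → x = neg a
  mul_reg : ∀ a : S, mul (mul a (inv a)) a = a
  inv_reg : ∀ a : S, mul (mul (inv a) a) (inv a) = inv a
  inv_unique : ∀ a x : S, mul (mul a x) a = a → mul (mul x a) x = x → x = inv a
  distrib : ∀ a b c : S, mul a (add b c) = add (add (mul a b) (neg a)) (mul a c)
  link : ∀ a : S, mul a (inv a) = add (neg a) a

/-- A dual weak brace: a weak brace whose multiplicative semigroup is Clifford. -/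
class DualWeakBrace (S : Type*) extends WeakBrace S where
  clifford : ∀ a : S, WeakBrace.mul a (WeakBrace.inv a) = WeakBrace.mul (WeakBrace.inv a) a

namespace WeakBrace

variable {S : Type*} [WeakBrace S]

/-- `λ_a(b) = -a + a ∘ b`. -/
def lam (a b : S) : S := add (neg a) (mul a b)

/-- `ρ_b(a) = (-a + a ∘ b)⁻ ∘ a ∘ b`. -/
def rho (b a : S) : S := mul (mul (inv (lam a b)) a) b

/-- `a · b = -a + a ∘ b - b`. -/
def cdot (a b : S) : S := add (add (neg a) (mul a b)) (neg b)

/-- `a⁰ = a - a`. -/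
def sq (a : S) : S := add a (neg a)

/-- Additive idempotent (the sets of idempotents of `+` and `∘` coincide). -/
def IsIdem (e : S) : Prop := add e e = e

/-- `[a,b]₊ = -a - b + a + b`. -/
def brkt (a b : S) : S := add (add (add (neg a) (neg b)) a) b

/-- `I` is a full inverse subsemigroup of `(S,+)`. -/
def IsFullAddSub (I : Set S) : Prop :=
  (∀ e : S, IsIdem e → e ∈ I) ∧ (∀ x ∈ I, ∀ y ∈ I, add x y ∈ I) ∧ (∀ x ∈ I, neg x ∈ I)

/-- `I` is a normal subsemigroup of `(S,+)`. -/
def IsNormalAdd (I : Set S) : Prop :=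
  IsFullAddSub I ∧ ∀ a : S, ∀ x ∈ I, add (add (neg a) x) a ∈ I

/-- `I` is a normal subsemigroup of `(S,∘)`. -/
def IsNormalMul (I : Set S) : Prop :=
  (∀ e : S, IsIdem e → e ∈ I) ∧ (∀ x ∈ I, ∀ y ∈ I, mul x y ∈ I) ∧ (∀ x ∈ I, inv x ∈ I) ∧
    ∀ a : S, ∀ x ∈ I, mul (mul (inv a) x) a ∈ I

/-- `I` is a left ideal of the weak brace `S`. -/
def IsLeftIdeal (I : Set S) : Prop :=
  IsFullAddSub I ∧ ∀ a : S, ∀ x ∈ I, lam a x ∈ I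

/-- `I` is an ideal of the weak brace `S`. -/
def IsIdeal (I : Set S) : Prop :=
  IsNormalAdd I ∧ (∀ a : S, ∀ x ∈ I, lam a x ∈ I) ∧ IsNormalMul I

/-- The socle `Soc(S)`. -/
def Soc (S : Type*) [WeakBrace S] : Set S :=
  {a | ∀ b : S, add a b = mul a b ∧ add a b = add b a}

/-- The annihilator `Ann(S)`. -/
def Ann (S : Type*) [WeakBrace S] : Set S :=
  {a | ∀ b : S, add a b = add b a ∧ add a b = mul a b ∧ mul a b = mul b a}

/-- The congruence `a ∼_I b ⟺ a⁰ = b⁰ and -a + b ∈ I` associated to an ideal `I`. -/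
def simI (I : Set S) (a b : S) : Prop := sq a = sq b ∧ add (neg a) b ∈ I

/-- Membership in the inverse subsemigroup of `(S,+)` generated by a set `X`. -/
inductive genAdd (X : Set S) : S → Prop
  | base : ∀ x ∈ X, genAdd X x
  | add : ∀ a b : S, genAdd X a → genAdd X b → genAdd X (add a b)
  | neg : ∀ a : S, genAdd X a → genAdd X (neg a)

/-- `X · Y`: the additive inverse subsemigroup generated by the elements `x · y`. -/
def cdotSet (X Y : Set S) : Set S :=
  {s | genAdd {z | ∃ x ∈ X, ∃ y ∈ Y, z = cdot x y} s}

/-- `S^(n)` for `n ≥ 1`: `S^(1) = S`, `S^(n+1) = S^(n) · S`. -/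
def Spow (S : Type*) [WeakBrace S] : ℕ → Set S
  | 0 => Set.univ
  | 1 => Set.univ
  | (n+2) => cdotSet (Spow S (n+1)) Set.univ

end WeakBrace

/-!
Both `(S,+)` and `(S,∘)` are inverse semigroups with the same idempotents, and idempotents of an
inverse semigroup commute; in a Clifford semigroup they are even central. Since `(S,∘)` is
Clifford, an idempotent `e` satisfies `-(b ∘ e) = -b + e`, i.e. `e ∘ b = e + b`. Applied to
`e = a⁻ ∘ a = -a + a` this shows that `-a + a` absorbs `a`, which makes `(S,+)` Clifford as
well, so `e` is central for `+` too. Hence `(e + a) · b = e + a · b` and `e · b = e + (b - b)`,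
and the idempotent `b - b` is absorbed by `a · b`, which ends in `-b`.
-/

structure IsInverseSemigroup {α : Type*} (op : α → α → α) (inv : α → α) : Prop where
  assoc : ∀ a b c, op (op a b) c = op a (op b c)
  op_inv_op : ∀ a, op (op a (inv a)) a = a
  inv_op_inv : ∀ a, op (op (inv a) a) (inv a) = inv a
  eq_inv_of : ∀ a x, op (op a x) a = a → op (op x a) x = x → x = inv a

namespace IsInverseSemigroup

variable {α : Type*} {op : α → α → α} {inv : α → α}

local infixl:70 " ⋆ " => op

variable (h : IsInverseSemigroup op inv)
include h

theorem inv_inv (a : α) : inv (inv a) = a :=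
  (h.eq_inv_of (inv a) a (h.inv_op_inv a) (h.op_inv_op a)).symm

theorem inv_eq_self {e : α} (he : e ⋆ e = e) : inv e = e :=
  (h.eq_inv_of e e (by rw [he, he]) (by rw [he, he])).symm

theorem op_inv_op_left (a b : α) : a ⋆ (inv a ⋆ (a ⋆ b)) = a ⋆ b := by
  rw [← h.assoc, ← h.assoc, h.op_inv_op]

theorem inv_op_inv_left (a b : α) : inv a ⋆ (a ⋆ (inv a ⋆ b)) = inv a ⋆ b := by
  rw [← h.assoc, ← h.assoc, h.inv_op_inv]

theorem op_inv_idem (a : α) : a ⋆ inv a ⋆ (a ⋆ inv a) = a ⋆ inv a := by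
  rw [← h.assoc, h.op_inv_op]

theorem inv_op_idem (a : α) : inv a ⋆ a ⋆ (inv a ⋆ a) = inv a ⋆ a := by
  rw [← h.assoc, h.inv_op_inv]

theorem idem_op_left {e : α} (he : e ⋆ e = e) (b : α) : e ⋆ (e ⋆ b) = e ⋆ b := by
  rw [← h.assoc, he]

theorem op_idem_of_idem {e f : α} (he : e ⋆ e = e) (hf : f ⋆ f = f) :
    e ⋆ f ⋆ (e ⋆ f) = e ⋆ f := by
  set x := inv (e ⋆ f)
  have hx : f ⋆ x ⋆ e = x := by
    refine h.eq_inv_of _ _ ?_ ?_ <;> simp only [h.assoc, h.idem_op_left he, h.idem_op_left hf]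
    · rw [← h.assoc e, ← h.assoc, h.op_inv_op]
    · rw [← h.assoc e f, h.inv_op_inv_left]
  have hxx : x ⋆ x = x := by
    conv_lhs => rw [← hx]
    simp only [h.assoc]
    rw [← h.assoc e f, h.inv_op_inv_left, ← h.assoc, hx]
  rw [← h.inv_inv (e ⋆ f), h.inv_eq_self hxx, hxx]

theorem idem_comm {e f : α} (he : e ⋆ e = e) (hf : f ⋆ f = f) : e ⋆ f = f ⋆ e := by
  have hef := h.op_idem_of_idem he hf
  have hfe := h.op_idem_of_idem hf he
  rw [← h.inv_eq_self hef]
  refine (h.eq_inv_of _ _ ?_ ?_).symm <;>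
    simp only [h.assoc, h.idem_op_left he, h.idem_op_left hf]
  · simpa only [h.assoc] using hef
  · simpa only [h.assoc] using hfe

theorem inv_op (a b : α) : inv (a ⋆ b) = inv b ⋆ inv a := by
  have key : ∀ c, b ⋆ (inv b ⋆ (inv a ⋆ (a ⋆ c))) = inv a ⋆ (a ⋆ (b ⋆ (inv b ⋆ c))) := fun c => by
    simpa only [h.assoc] using congrArg (· ⋆ c) (h.idem_comm (h.op_inv_idem b) (h.inv_op_idem a))
  refine (h.eq_inv_of _ _ ?_ ?_).symm <;> simp only [h.assoc]
  · rw [key, h.op_inv_op_left, ← h.assoc b, h.op_inv_op]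
  · rw [← key, h.inv_op_inv_left, ← h.assoc (inv a) a, h.inv_op_inv]

theorem idem_comm_of_clifford (hc : ∀ a, a ⋆ inv a = inv a ⋆ a) {e : α} (he : e ⋆ e = e)
    (a : α) : e ⋆ a = a ⋆ e := by
  have hcomm : inv a ⋆ a ⋆ e = e ⋆ (inv a ⋆ a) := h.idem_comm (h.inv_op_idem a) he
  have hconj : a ⋆ e ⋆ inv a = e ⋆ (inv a ⋆ a) := by
    have := hc (a ⋆ e)
    rw [h.inv_op, h.inv_eq_self he] at this
    calc a ⋆ e ⋆ inv a = a ⋆ e ⋆ (e ⋆ inv a) := by simp only [h.assoc, h.idem_op_left he]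
      _ = e ⋆ inv a ⋆ (a ⋆ e) := this
      _ = e ⋆ (inv a ⋆ a ⋆ e) := by simp only [h.assoc]
      _ = e ⋆ (inv a ⋆ a) := by rw [hcomm, ← h.assoc, he]
  calc e ⋆ a = e ⋆ (a ⋆ inv a) ⋆ a := by rw [h.assoc, h.op_inv_op]
    _ = a ⋆ e ⋆ inv a ⋆ a := by rw [hc, hconj]
    _ = a ⋆ (inv a ⋆ a ⋆ e) := by rw [hcomm]; simp only [h.assoc]
    _ = a ⋆ e := by rw [← h.assoc, ← h.assoc, h.op_inv_op]

end IsInverseSemigroup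

namespace WeakBrace

variable {S : Type*}

section General

variable [WeakBrace S] {e f : S}

theorem isInverseSemigroup_add : IsInverseSemigroup (add : S → S → S) neg :=
  ⟨add_assoc, add_reg, neg_reg, neg_unique⟩

theorem isInverseSemigroup_mul : IsInverseSemigroup (mul : S → S → S) inv :=
  ⟨mul_assoc, mul_reg, inv_reg, inv_unique⟩

theorem isIdem_sq (a : S) : IsIdem (sq a) :=
  isInverseSemigroup_add.op_inv_idem a

theorem IsIdem.neg_eq (he : IsIdem e) : neg e = e :=
  isInverseSemigroup_add.inv_eq_self he

theorem isIdem_add (he : IsIdem e) (hf : IsIdem f) : IsIdem (add e f) :=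
  isInverseSemigroup_add.op_idem_of_idem he hf

theorem IsIdem.add_comm_of_isIdem (he : IsIdem e) (hf : IsIdem f) : add e f = add f e :=
  isInverseSemigroup_add.idem_comm he hf

theorem IsIdem.add_add_self (he : IsIdem e) (f : S) : add e (add e f) = add e f :=
  isInverseSemigroup_add.idem_op_left he f

theorem IsIdem.mul_self (he : IsIdem e) : mul e e = e := by
  have := mul_reg e
  rwa [link, he.neg_eq, show add e e = e from he] at this

theorem isIdem_of_mul_self (h : mul e e = e) : IsIdem e := by
  have hneg : add (neg e) e = e := by
    rw [← link, isInverseSemigroup_mul.inv_eq_self h, h]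
  calc add e e = add e (add (neg e) e) := by rw [hneg]
    _ = e := by rw [← add_assoc, add_reg]

theorem isIdem_mul (he : IsIdem e) (hf : IsIdem f) : IsIdem (mul e f) :=
  isIdem_of_mul_self (isInverseSemigroup_mul.op_idem_of_idem he.mul_self hf.mul_self)

theorem IsIdem.mul_comm_of_isIdem (he : IsIdem e) (hf : IsIdem f) : mul e f = mul f e :=
  isInverseSemigroup_mul.idem_comm he.mul_self hf.mul_self

theorem IsIdem.mul_add (he : IsIdem e) (x y : S) :
    mul e (add x y) = add (add (mul e x) e) (mul e y) := by
  rw [distrib, he.neg_eq]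

theorem IsIdem.mul_eq_add_of_isIdem (he : IsIdem e) (hf : IsIdem f) : mul e f = add e f := by
  have hg : IsIdem (mul e f) := isIdem_mul he hf
  have hcomm : mul f e = mul e f := hf.mul_comm_of_isIdem he
  have absorb : ∀ {u}, IsIdem u → mul e f = add (add (mul e f) u) (mul e f) →
      add (mul e f) u = mul e f := fun hu h => by
    conv_rhs => rw [h]
    rw [add_assoc, hu.add_comm_of_isIdem hg, ← add_assoc, hg]
  have hge : add (mul e f) e = mul e f := absorb he (by rw [← he.mul_add, hf])
  have hgf : add (mul e f) f = mul e f := absorb hf (by rw [← hcomm, ← hf.mul_add, he])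
  have hef : IsIdem (add e f) := isIdem_add he hf
  have mul_e : mul (add e f) e = mul e f := by
    rw [hef.mul_comm_of_isIdem he, he.mul_add, he.mul_self, he,
      he.add_comm_of_isIdem hg, hge]
  have mul_f : mul (add e f) f = mul e f := by
    rw [hef.mul_comm_of_isIdem hf, hf.mul_add, hf.mul_self, hcomm, hgf, hgf]
  symm
  calc add e f = mul (add e f) (add e f) := hef.mul_self.symm
    _ = add (add (mul e f) (add e f)) (mul e f) := by rw [hef.mul_add, mul_e, mul_f]
    _ = mul e f := by rw [← add_assoc, hge, hgf, hg]

theorem add_distrib (z a x y : S) :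
    add (add (add z (mul a x)) (neg a)) (mul a y) = add z (mul a (add x y)) := by
  rw [distrib, add_assoc, add_assoc, add_assoc]

theorem neg_mul (a b : S) : neg (mul a b) = add (add (neg a) (mul a (neg b))) (neg a) := by
  refine (neg_unique _ _ ?_ ?_).symm <;> simp only [← add_assoc]
  · rw [← distrib, ← distrib, add_reg]
  · rw [add_distrib, add_distrib, ← add_assoc (neg b), neg_reg]

theorem IsIdem.sq_mul (he : IsIdem e) (b : S) : sq (mul e b) = add e (sq b) := by
  have hb : IsIdem (add b (neg b)) := isIdem_sq b
  rw [sq, sq, neg_mul, ← add_assoc, ← add_assoc, ← distrib, he.neg_eq,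
    he.mul_eq_add_of_isIdem hb, add_assoc, hb.add_comm_of_isIdem he,
    ← add_assoc, he]

theorem IsIdem.add_mul (he : IsIdem e) (b : S) : add e (mul e b) = mul e b := by
  have h : mul e b = add (add e (sq b)) (mul e b) := by
    rw [← he.sq_mul]
    exact (add_reg _).symm
  rw [h, ← add_assoc, ← add_assoc, he]

end General

section Dual

variable [DualWeakBrace S] {e : S}

theorem IsIdem.mul_comm (he : IsIdem e) (a : S) : mul e a = mul a e :=
  isInverseSemigroup_mul.idem_comm_of_clifford DualWeakBrace.clifford he.mul_self a

theorem IsIdem.mul_eq_add (he : IsIdem e) (b : S) : mul e b = add e b := by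
  rw [he.mul_comm]
  have hb : IsIdem (add b (neg b)) := isIdem_sq b
  have hx : add e (mul b e) = mul b e := by rw [← he.mul_comm]; exact he.add_mul b
  have hsq : sq (mul b e) = add (mul b e) (neg b) := by
    rw [sq, neg_mul, he.neg_eq]
    simp only [← add_assoc]
    rw [← distrib, he]
  have hsq' : add (mul b e) (neg b) = add e (add b (neg b)) := by
    rw [← hsq, ← he.mul_comm]; exact he.sq_mul b
  have hneg : neg (mul b e) = add (neg b) e := by
    refine (neg_unique _ _ ?_ ?_).symm <;> simp only [add_assoc]
    · rw [hx, ← add_assoc, ← hsq]; exact add_reg _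
    · rw [← add_assoc e, hx, ← add_assoc (mul b e), hsq',
        add_assoc, hb.add_comm_of_isIdem he, ← add_assoc e e, he,
        he.add_comm_of_isIdem hb, ← add_assoc, ← add_assoc, neg_reg]
  rw [← isInverseSemigroup_add.inv_inv (mul b e), hneg, isInverseSemigroup_add.inv_op,
    isInverseSemigroup_add.inv_inv, he.neg_eq]

theorem neg_add_self_add (a : S) : add (add (neg a) a) a = a := by
  have hu : mul (inv a) a = add (neg a) a := by rw [← DualWeakBrace.clifford, link]
  have hidem : IsIdem (mul (inv a) a) := isIdem_of_mul_self (isInverseSemigroup_mul.inv_op_idem a)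
  rw [← hu, ← hidem.mul_eq_add, ← DualWeakBrace.clifford, mul_reg]

theorem sq_eq_neg_add (a : S) : sq a = add (neg a) a := by
  have h := neg_add_self_add (neg a)
  rw [isInverseSemigroup_add.inv_inv] at h
  calc sq a = add (add (add (neg a) a) a) (neg a) := by rw [neg_add_self_add]; rfl
    _ = add (add (neg a) a) (sq a) := add_assoc _ _ _
    _ = add (sq a) (add (neg a) a) :=
        IsIdem.add_comm_of_isIdem (isInverseSemigroup_add.inv_op_idem a) (isIdem_sq a)
    _ = add (neg a) a := by rw [sq, ← add_assoc, h]

theorem IsIdem.add_comm (he : IsIdem e) (a : S) : add e a = add a e :=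
  isInverseSemigroup_add.idem_comm_of_clifford sq_eq_neg_add he a

theorem IsIdem.cdot_eq_add_sq (he : IsIdem e) (b : S) : cdot e b = add e (sq b) := by
  rw [cdot, he.neg_eq, he.mul_eq_add, ← add_assoc, he, add_assoc, sq]

theorem sq_add_cdot (a b : S) : add (sq b) (cdot a b) = cdot a b := by
  rw [(isIdem_sq b).add_comm, cdot, sq, add_assoc _ (neg b), ← add_assoc (neg b),
    neg_reg]

theorem IsIdem.cdot_add (he : IsIdem e) (a b : S) : cdot (add e a) b = add e (cdot a b) := by
  rw [cdot, cdot, isInverseSemigroup_add.inv_op, he.neg_eq, ← he.mul_eq_add a, mul_assoc,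
    he.mul_eq_add]
  simp only [add_assoc]
  rw [he.add_add_self, ← add_assoc (neg a), ← he.add_comm, add_assoc]

end Dual

end WeakBrace

open WeakBrace
theorem stmt8 {S : Type*} [DualWeakBrace S] (a b e : S) (he : IsIdem e) :
    cdot (add e a) b = add (cdot e b) (cdot a b) := by
  rw [he.cdot_add, he.cdot_eq_add_sq, WeakBrace.add_assoc, sq_add_cdot]
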